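/- arXiv:2007.11033 — 2 statements merged into one kernel-verified Lean document; each statement's English description precedes it below -/
import Mathlib

section
/- Suppose v ≥ 3ρ + 12 and (X, B) is a PSTS(v) whose maximum partial parallel class has size ρ. Then the number of blocks is at most ρ(6ρ + v - 7)/2. -/
/-!
Let `P` be a maximum partial parallel class and `S` the `3ρ` points it covers; by maximality every
block meets `S`. Blocks meeting `S` in at least two points are counted by the pairs of `S` they
contain: a block of `P` contains three such pairs, any other block at least one, so there are at
most `C(3ρ, 2) - 2ρ` of them. A block meeting `S` in a single point `x` has two points outside `S`,
and these outside pairs are disjoint for blocks through the same `x`, so `x` lies on at most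
`(v - 3ρ) / 2` such blocks. If `x ≠ y` lie in the same `p ∈ P`, every such block through `x` meets
every such block through `y` (otherwise replacing `p` by the two would enlarge `P`), so if `y` lies
on one of them, `x` lies on at most two. Hence each `p ∈ P` meets at most
`max ((v - 3ρ) / 2, 6) = (v - 3ρ) / 2` one-point blocks, and summing over `P` gives the bound.
-/

open Finset

theorem two_mul_sum_le_of_concentrated {α : Type*} {p : Finset α} {d : α → ℕ} {K : ℕ}
    (hK : 4 * #p ≤ K) (hd : ∀ x ∈ p, 2 * d x ≤ K)
    (hconc : ∀ x ∈ p, ∀ y ∈ p, x ≠ y → 0 < d y → d x ≤ 2) :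
    2 * ∑ x ∈ p, d x ≤ K := by
  by_cases hbig : ∃ x ∈ p, 2 < d x
  · obtain ⟨x, hx, hdx⟩ := hbig
    have hzero : ∀ y ∈ p, y ≠ x → d y = 0 := fun y hy hyx => by
      by_contra h
      have := hconc x hx y hy (Ne.symm hyx) (Nat.pos_of_ne_zero h)
      omega
    rw [sum_eq_single_of_mem x hx hzero]
    exact hd x hx
  · push Not at hbig
    have : ∑ x ∈ p, d x ≤ #p • 2 := sum_le_card_nsmul p d 2 hbig
    rw [smul_eq_mul] at this
    omega

section

variable {X : Type*} [DecidableEq X] {B P : Finset (Finset X)}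

def IsPartialLinear (B : Finset (Finset X)) : Prop :=
  (B : Set (Finset X)).Pairwise fun b₁ b₂ => #(b₁ ∩ b₂) ≤ 1

theorem isPartialLinear_of_card_filter_le_one
    (h : ∀ x y : X, x ≠ y → #{b ∈ B | x ∈ b ∧ y ∈ b} ≤ 1) : IsPartialLinear B := by
  intro b₁ hb₁ b₂ hb₂ hne
  by_contra! hlt
  obtain ⟨x, hx, y, hy, hxy⟩ := one_lt_card.mp hlt
  rw [mem_inter] at hx hy
  exact hne (card_le_one.mp (h x y hxy) b₁ (by simp [mem_coe.1 hb₁, hx.1, hy.1])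
    b₂ (by simp [mem_coe.1 hb₂, hx.2, hy.2]))

namespace IsPartialLinear

theorem eq_of_mem_of_mem (hB : IsPartialLinear B) {b₁ b₂ : Finset X} (hb₁ : b₁ ∈ B)
    (hb₂ : b₂ ∈ B) {x y : X} (hxy : x ≠ y) (hx₁ : x ∈ b₁) (hy₁ : y ∈ b₁) (hx₂ : x ∈ b₂)
    (hy₂ : y ∈ b₂) : b₁ = b₂ := by
  by_contra hne
  exact hxy (card_le_one.mp (hB hb₁ hb₂ hne) x (mem_inter.2 ⟨hx₁, hx₂⟩) y
    (mem_inter.2 ⟨hy₁, hy₂⟩))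

theorem sum_choose_two_card_inter_le (hB : IsPartialLinear B) (S : Finset X) :
    ∑ b ∈ B, (#(b ∩ S)).choose 2 ≤ (#S).choose 2 := by
  have hdisj : (B : Set (Finset X)).PairwiseDisjoint fun b => powersetCard 2 (b ∩ S) := by
    intro b₁ hb₁ b₂ hb₂ hne
    refine disjoint_left.2 fun t ht₁ ht₂ => ?_
    rw [mem_powersetCard] at ht₁ ht₂
    have := card_le_card (subset_inter (ht₁.1.trans inter_subset_left)
      (ht₂.1.trans inter_subset_left))
    have := hB hb₁ hb₂ hne
    omega
  calc ∑ b ∈ B, (#(b ∩ S)).choose 2 = #(B.biUnion fun b => powersetCard 2 (b ∩ S)) := by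
        simp [card_biUnion hdisj]
    _ ≤ #(powersetCard 2 S) :=
        card_le_card (biUnion_subset.2 fun _ _ => powersetCard_mono inter_subset_right)
    _ = (#S).choose 2 := card_powersetCard _ _

theorem pairwiseDisjoint_sdiff (hB : IsPartialLinear B) {S : Finset X} {x : X} (hx : x ∈ S) :
    (({b ∈ B | x ∈ b} : Finset (Finset X)) : Set (Finset X)).PairwiseDisjoint (· \ S) := by
  intro b₁ hb₁ b₂ hb₂ hne
  rw [mem_coe, mem_filter] at hb₁ hb₂
  refine disjoint_left.2 fun z hz₁ hz₂ => ?_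
  rw [mem_sdiff] at hz₁ hz₂
  exact hne (hB.eq_of_mem_of_mem hb₁.1 hb₂.1 (ne_of_mem_of_not_mem hx hz₁.2) hb₁.2 hz₁.1
    hb₂.2 hz₂.1)

theorem two_mul_card_add_card_le [Fintype X] (hB : IsPartialLinear B) {S : Finset X} {x : X}
    (hx : x ∈ S) {T : Finset (Finset X)} (hT : T ⊆ {b ∈ B | x ∈ b})
    (h2 : ∀ b ∈ T, #(b \ S) = 2) : 2 * #T + #S ≤ Fintype.card X := by
  have hU : #(T.biUnion (· \ S)) = 2 * #T := by
    rw [card_biUnion ((hB.pairwiseDisjoint_sdiff hx).subset (coe_subset.2 hT)),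
      sum_congr rfl h2, sum_const, smul_eq_mul, mul_comm]
  have hUS : Disjoint (T.biUnion (· \ S)) S :=
    (disjoint_biUnion_left _ _ _).2 fun _ _ => sdiff_disjoint
  rw [← hU, ← card_union_of_disjoint hUS]
  exact card_le_univ _

end IsPartialLinear

theorem card_le_card_of_pairwiseDisjoint_of_not_disjoint {ι : Type*} {T : Finset ι}
    {f : ι → Finset X} (hT : (T : Set ι).PairwiseDisjoint f) {c : Finset X}
    (hc : ∀ i ∈ T, ¬Disjoint (f i) c) : #T ≤ #c :=
  calc #T = ∑ _i ∈ T, 1 := card_eq_sum_ones T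
    _ ≤ ∑ i ∈ T, #(f i ∩ c) :=
        sum_le_sum fun i hi => card_pos.2 (not_disjoint_iff_nonempty_inter.1 (hc i hi))
    _ = #(T.biUnion fun i => f i ∩ c) :=
        (card_biUnion (hT.mono fun _ => inter_subset_left)).symm
    _ ≤ #c := card_le_card (biUnion_subset.2 fun _ _ => inter_subset_right)

theorem sum_card_filter_inter_eq_singleton (B : Finset (Finset X)) (S : Finset X) :
    ∑ x ∈ S, #{b ∈ B | b ∩ S = {x}} = #{b ∈ B | #(b ∩ S) = 1} := by
  rw [← card_biUnion]
  · congr 1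
    ext b
    simp only [mem_biUnion, mem_filter, card_eq_one]
    constructor
    · rintro ⟨x, -, hb, hx⟩
      exact ⟨hb, x, hx⟩
    · rintro ⟨hb, x, hx⟩
      exact ⟨x, mem_of_mem_inter_right (hx ▸ mem_singleton_self x), hb, hx⟩
  · intro x _ y _ hxy
    refine disjoint_left.2 fun b hbx hby => hxy ?_
    rw [mem_filter] at hbx hby
    exact singleton_injective (hbx.2.symm.trans hby.2)

theorem filter_inter_eq_singleton_subset_filter_mem (B : Finset (Finset X)) (S : Finset X)
    (x : X) : {b ∈ B | b ∩ S = {x}} ⊆ {b ∈ B | x ∈ b} :=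
  monotone_filter_right B fun _ _ hb => mem_of_mem_inter_left (hb ▸ mem_singleton_self x)

theorem card_sdiff_eq_two_of_inter_eq_singleton {b S : Finset X} (hb : #b = 3) {x : X}
    (hx : b ∩ S = {x}) : #(b \ S) = 2 := by
  have := card_sdiff_add_card_inter b S
  rw [hx, card_singleton, hb] at this
  omega

theorem notMem_of_inter_biUnion_eq_singleton {b : Finset X} (hb : #b = 3) {x : X}
    (hx : b ∩ P.biUnion id = {x}) : b ∉ P := fun hbP => by
  have hbS : b ⊆ P.biUnion id := subset_biUnion_of_mem id hbP
  rw [← inter_eq_left.2 hbS, hx, card_singleton] at hb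
  omega

theorem card_biUnion_id_of_card_eq (hP : (P : Set (Finset X)).PairwiseDisjoint id) {k : ℕ}
    (hk : ∀ p ∈ P, #p = k) : #(P.biUnion id) = k * #P := by
  rw [card_biUnion hP, mul_comm]
  exact sum_const_nat hk

theorem disjoint_of_inter_biUnion_subset (hP : (P : Set (Finset X)).PairwiseDisjoint id)
    {p q : Finset X} (hp : p ∈ P) (hq : q ∈ P) (hpq : p ≠ q) {b : Finset X}
    (hb : b ∩ P.biUnion id ⊆ p) : Disjoint b q :=
  disjoint_left.2 fun _ hzb hzq => disjoint_left.1 (hP hp hq hpq)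
    (hb (mem_inter.2 ⟨hzb, subset_biUnion_of_mem id hq hzq⟩)) hzq

structure IsMaxParallelClass (B P : Finset (Finset X)) : Prop where
  subset : P ⊆ B
  pairwiseDisjoint : (P : Set (Finset X)).PairwiseDisjoint id
  card_le : ∀ Q ⊆ B, (Q : Set (Finset X)).PairwiseDisjoint id → #Q ≤ #P

namespace IsMaxParallelClass

theorem inter_biUnion_nonempty (hP : IsMaxParallelClass B P) {b : Finset X} (hb : b ∈ B)
    (hne : b.Nonempty) : (b ∩ P.biUnion id).Nonempty := by
  by_contra h
  rw [not_nonempty_iff_eq_empty, ← disjoint_iff_inter_eq_empty] at h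
  have hbP : b ∉ P := fun hbP =>
    hne.ne_empty (disjoint_self.1 (h.mono_right (subset_biUnion_of_mem id hbP)))
  have hQ : ((insert b P : Finset (Finset X)) : Set (Finset X)).PairwiseDisjoint id := by
    rw [coe_insert]
    exact hP.pairwiseDisjoint.insert fun q hq _ => h.mono_right (subset_biUnion_of_mem id hq)
  have := hP.card_le _ (insert_subset hb hP.subset) hQ
  rw [card_insert_of_notMem hbP] at this
  omega

theorem not_disjoint_of_inter_biUnion_subset (hP : IsMaxParallelClass B P) {p : Finset X}
    (hp : p ∈ P) {b₁ b₂ : Finset X} (hb₁ : b₁ ∈ B \ P) (hb₂ : b₂ ∈ B \ P) (hne : b₁ ≠ b₂)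
    (hb₁p : b₁ ∩ P.biUnion id ⊆ p) (hb₂p : b₂ ∩ P.biUnion id ⊆ p) : ¬Disjoint b₁ b₂ := by
  intro h
  rw [mem_sdiff] at hb₁ hb₂
  have hb₂' : b₂ ∉ P.erase p := fun h' => hb₂.2 (mem_of_mem_erase h')
  have hb₁' : b₁ ∉ insert b₂ (P.erase p) := by
    rw [mem_insert, not_or]
    exact ⟨hne, fun h' => hb₁.2 (mem_of_mem_erase h')⟩
  have hdisj : ∀ {b}, b ∩ P.biUnion id ⊆ p → ∀ q ∈ P.erase p, Disjoint b q := fun hb q hq =>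
    disjoint_of_inter_biUnion_subset hP.pairwiseDisjoint hp (mem_of_mem_erase hq)
      (ne_of_mem_erase hq).symm hb
  have hQ : ((insert b₁ (insert b₂ (P.erase p)) : Finset (Finset X)) :
      Set (Finset X)).PairwiseDisjoint id := by
    simp only [coe_insert]
    refine ((hP.pairwiseDisjoint.subset (coe_subset.2 (erase_subset p P))).insert
      fun q hq _ => hdisj hb₂p q hq).insert fun q hq _ => ?_
    rcases hq with rfl | hq
    · exact h
    · exact hdisj hb₁p q hq
  have := hP.card_le _ (insert_subset hb₁.1 (insert_subset hb₂.1
    ((erase_subset p P).trans hP.subset))) hQ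
  rw [card_insert_of_notMem hb₁', card_insert_of_notMem hb₂', card_erase_of_mem hp] at this
  have := card_pos.2 ⟨p, hp⟩
  omega

theorem card_filter_inter_biUnion_eq_singleton_le_two (hP : IsMaxParallelClass B P)
    (hB : IsPartialLinear B) (h3 : ∀ b ∈ B, #b = 3) {p : Finset X} (hp : p ∈ P) {x y : X}
    (hx : x ∈ p) (hxy : x ≠ y) {b₀ : Finset X} (hb₀ : b₀ ∈ B)
    (hb₀y : b₀ ∩ P.biUnion id = {y}) (hy : y ∈ p) :
    #{b ∈ B | b ∩ P.biUnion id = {x}} ≤ 2 := by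
  set S := P.biUnion id
  have hmeet : ∀ b ∈ {b ∈ B | b ∩ S = {x}}, ¬Disjoint (b \ S) (b₀ \ S) := by
    intro b hb
    rw [mem_filter] at hb
    have hbb₀ : b ≠ b₀ := fun h => hxy (singleton_injective (hb.2.symm.trans (h ▸ hb₀y)))
    obtain ⟨z, hzb, hzb₀⟩ := not_disjoint_iff.1 (hP.not_disjoint_of_inter_biUnion_subset hp
      (mem_sdiff.2 ⟨hb.1, notMem_of_inter_biUnion_eq_singleton (h3 b hb.1) hb.2⟩)
      (mem_sdiff.2 ⟨hb₀, notMem_of_inter_biUnion_eq_singleton (h3 b₀ hb₀) hb₀y⟩) hbb₀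
      (hb.2 ▸ singleton_subset_iff.2 hx) (hb₀y ▸ singleton_subset_iff.2 hy))
    have hzS : z ∉ S := fun hzS => by
      have hzx : z ∈ b ∩ S := mem_inter.2 ⟨hzb, hzS⟩
      have hzy : z ∈ b₀ ∩ S := mem_inter.2 ⟨hzb₀, hzS⟩
      rw [hb.2, mem_singleton] at hzx
      rw [hb₀y, mem_singleton] at hzy
      exact hxy (hzx ▸ hzy)
    exact not_disjoint_iff.2 ⟨z, mem_sdiff.2 ⟨hzb, hzS⟩, mem_sdiff.2 ⟨hzb₀, hzS⟩⟩
  calc #{b ∈ B | b ∩ S = {x}} ≤ #(b₀ \ S) := card_le_card_of_pairwiseDisjoint_of_not_disjoint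
        ((hB.pairwiseDisjoint_sdiff (subset_biUnion_of_mem id hp hx)).subset (coe_subset.2
          (filter_inter_eq_singleton_subset_filter_mem B S x)))
        hmeet
    _ = 2 := card_sdiff_eq_two_of_inter_eq_singleton (h3 b₀ hb₀) hb₀y

theorem two_mul_card_filter_card_inter_eq_one_add_le [Fintype X] (hP : IsMaxParallelClass B P)
    (hB : IsPartialLinear B) (h3 : ∀ b ∈ B, #b = 3) (hv : 3 * #P + 12 ≤ Fintype.card X) :
    2 * #{b ∈ B | #(b ∩ P.biUnion id) = 1} + 3 * #P * #P ≤ #P * Fintype.card X := by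
  set S := P.biUnion id
  have hS : #S = 3 * #P := card_biUnion_id_of_card_eq hP.pairwiseDisjoint fun p hp =>
    h3 p (hP.subset hp)
  set d : X → ℕ := fun x => #{b ∈ B | b ∩ S = {x}}
  have hdeg : ∀ x ∈ S, 2 * d x + #S ≤ Fintype.card X := fun x hx =>
    hB.two_mul_card_add_card_le hx (filter_inter_eq_singleton_subset_filter_mem B S x)
      fun b hb => by
        rw [mem_filter] at hb
        exact card_sdiff_eq_two_of_inter_eq_singleton (h3 b hb.1) hb.2
  have hblock : ∀ p ∈ P, 2 * ∑ x ∈ p, d x ≤ Fintype.card X - #S := fun p hp =>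
    two_mul_sum_le_of_concentrated (by rw [h3 p (hP.subset hp)]; omega)
      (fun x hx => by have := hdeg x (subset_biUnion_of_mem id hp hx); omega)
      fun x hx y hy hxy hdy => by
        obtain ⟨b₀, hb₀⟩ := card_pos.1 hdy
        rw [mem_filter] at hb₀
        exact hP.card_filter_inter_biUnion_eq_singleton_le_two hB h3 hp hx hxy hb₀.1 hb₀.2 hy
  have hsum : 2 * #{b ∈ B | #(b ∩ S) = 1} ≤ #P * (Fintype.card X - #S) :=
    calc 2 * #{b ∈ B | #(b ∩ S) = 1} = ∑ p ∈ P, 2 * ∑ x ∈ p, d x := by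
          rw [← sum_card_filter_inter_eq_singleton, sum_biUnion hP.pairwiseDisjoint, mul_sum]
          rfl
      _ ≤ ∑ _p ∈ P, (Fintype.card X - #S) := sum_le_sum hblock
      _ = #P * (Fintype.card X - #S) := by rw [sum_const, smul_eq_mul]
  have hsplit : #P * (Fintype.card X - #S) + #P * #S = #P * Fintype.card X := by
    rw [← mul_add, Nat.sub_add_cancel (by omega)]
  rw [hS] at hsum hsplit
  linarith

theorem card_filter_two_le_card_inter_add_le (hP : IsMaxParallelClass B P)
    (hB : IsPartialLinear B) (h3 : ∀ b ∈ B, #b = 3) :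
    #{b ∈ B | 2 ≤ #(b ∩ P.biUnion id)} + 2 * #P ≤ (3 * #P).choose 2 := by
  set S := P.biUnion id
  have hpS : ∀ p ∈ P, p ∩ S = p := fun p hp => inter_eq_left.2 (subset_biUnion_of_mem id hp)
  have hP3 : ∀ p ∈ P, (#(p ∩ S)).choose 2 = 3 := fun p hp => by
    rw [hpS p hp, h3 p (hP.subset hp)]
    rfl
  have hPB₂ : P ⊆ {b ∈ B | 2 ≤ #(b ∩ S)} := fun p hp =>
    mem_filter.2 ⟨hP.subset hp, by rw [hpS p hp, h3 p (hP.subset hp)]; omega⟩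
  calc #{b ∈ B | 2 ≤ #(b ∩ S)} + 2 * #P = #({b ∈ B | 2 ≤ #(b ∩ S)} \ P) + 3 * #P := by
        rw [← card_sdiff_add_card_eq_card hPB₂]
        ring
    _ ≤ ∑ b ∈ {b ∈ B | 2 ≤ #(b ∩ S)} \ P, (#(b ∩ S)).choose 2 +
        ∑ b ∈ P, (#(b ∩ S)).choose 2 := by
        gcongr
        · exact (card_eq_sum_ones _).trans_le <| sum_le_sum fun b hb =>
            Nat.choose_pos (mem_filter.1 (mem_sdiff.1 hb).1).2
        · rw [sum_const_nat hP3, mul_comm]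
    _ = ∑ b ∈ {b ∈ B | 2 ≤ #(b ∩ S)}, (#(b ∩ S)).choose 2 := sum_sdiff hPB₂
    _ ≤ ∑ b ∈ B, (#(b ∩ S)).choose 2 := sum_le_sum_of_subset (filter_subset _ _)
    _ ≤ (3 * #P).choose 2 := by
        rw [← card_biUnion_id_of_card_eq hP.pairwiseDisjoint fun p hp => h3 p (hP.subset hp)]
        exact hB.sum_choose_two_card_inter_le S

theorem card_filter_card_inter_eq_one_add_card_filter (hP : IsMaxParallelClass B P)
    (hne : ∀ b ∈ B, b.Nonempty) :
    #{b ∈ B | #(b ∩ P.biUnion id) = 1} + #{b ∈ B | 2 ≤ #(b ∩ P.biUnion id)} = #B := by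
  rw [← card_filter_add_card_filter_not (s := B) (fun b => #(b ∩ P.biUnion id) = 1)]
  congr 2
  refine filter_congr fun b hb => ?_
  have := card_pos.2 (hP.inter_biUnion_nonempty hb (hne b hb))
  omega

end IsMaxParallelClass

end

/-- Corollary: if v ≥ 3ρ + 12 and a PSTS(v) has maximum partial parallel class
of size ρ, then the number of blocks is at most ρ(6ρ + v - 7)/2. -/
theorem stmt_12 {X : Type*} [Fintype X] [DecidableEq X] (ρ : ℕ)
    (hv : 3 * ρ + 12 ≤ Fintype.card X)
    (B : Finset (Finset X))
    (hcard : ∀ b ∈ B, b.card = 3)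
    (hpair : ∀ x y : X, x ≠ y → (B.filter (fun b => x ∈ b ∧ y ∈ b)).card ≤ 1)
    (hex : ∃ P ⊆ B, (∀ b1 ∈ P, ∀ b2 ∈ P, b1 ≠ b2 → Disjoint b1 b2) ∧ P.card = ρ)
    (hmax : ∀ P ⊆ B, (∀ b1 ∈ P, ∀ b2 ∈ P, b1 ≠ b2 → Disjoint b1 b2) → P.card ≤ ρ) :
    (B.card : ℚ) ≤ (ρ : ℚ) * (6 * (ρ : ℚ) + (Fintype.card X : ℚ) - 7) / 2 := by
  obtain ⟨P, hPB, hPdisj, rfl⟩ := hex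
  have hP : IsMaxParallelClass B P :=
    ⟨hPB, fun _ h₁ _ h₂ => hPdisj _ h₁ _ h₂, fun Q hQB hQ => hmax Q hQB fun _ h₁ _ h₂ => hQ h₁ h₂⟩
  have hB : IsPartialLinear B := isPartialLinear_of_card_filter_le_one hpair
  have hsplit := hP.card_filter_card_inter_eq_one_add_card_filter fun b hb =>
    card_pos.1 (by rw [hcard b hb]; norm_num)
  have h₁ := hP.two_mul_card_filter_card_inter_eq_one_add_le hB hcard hv
  have h₂ := hP.card_filter_two_le_card_inter_add_le hB hcard
  have hchoose : ((3 * #P).choose 2 : ℚ) = 3 * #P * (3 * #P - 1) / 2 := by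
    rw [Nat.cast_choose_two]
    push_cast
    ring
  rw [← hsplit]
  generalize #{b ∈ B | #(b ∩ P.biUnion id) = 1} = n₁ at h₁ ⊢
  generalize #{b ∈ B | 2 ≤ #(b ∩ P.biUnion id)} = n₂ at h₂ ⊢
  qify at h₁ h₂
  push_cast
  linarith
end

section
/- For all v ≥ 15, the maximum number of blocks in a partial Steiner triple system of order v in which no two blocks are disjoint equals ⌊(v-1)/2⌋. -/
/-!
A nonempty intersecting linear family of triples either has a point common to all blocks, or
not. In the first case the blocks, with the common point removed, are pairwise disjoint pairs,
so there are at most `(v - 1) / 2` of them. In the second case every block `b` meets each other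
block in one of its three points, and each point `p` lies on at most three blocks: every block
through `p` meets a block avoiding `p`, in a point that determines it. Hence there are at most
`1 + 3 · 2 = 7 ≤ (v - 1) / 2` blocks. The bound is attained by the windmill: all triples
`{c, a, b}` for a fixed point `c` and disjoint pairs `{a, b}`.
-/

open Finset

variable {α : Type*} [DecidableEq α]

def IsLinear (B : Finset (Finset α)) : Prop :=
  ∀ x y : α, x ≠ y → (B.filter fun b => x ∈ b ∧ y ∈ b).card ≤ 1

namespace IsLinear

variable {B : Finset (Finset α)}

theorem eq_of_mem (hB : IsLinear B) {b₁ b₂ : Finset α} (hb₁ : b₁ ∈ B) (hb₂ : b₂ ∈ B)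
    {x y : α} (hxy : x ≠ y) (hx₁ : x ∈ b₁) (hy₁ : y ∈ b₁) (hx₂ : x ∈ b₂) (hy₂ : y ∈ b₂) :
    b₁ = b₂ :=
  card_le_one.mp (hB x y hxy) _ (mem_filter.mpr ⟨hb₁, hx₁, hy₁⟩) _ (mem_filter.mpr ⟨hb₂, hx₂, hy₂⟩)

theorem two_mul_card_le [Fintype α] (hB : IsLinear B) (h3 : ∀ b ∈ B, b.card = 3) {x : α}
    (hx : ∀ b ∈ B, x ∈ b) : 2 * B.card ≤ Fintype.card α - 1 := by
  have hdisj : (B : Set (Finset α)).PairwiseDisjoint (·.erase x) := by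
    intro b₁ hb₁ b₂ hb₂ hne
    refine disjoint_left.mpr fun a ha₁ ha₂ => hne ?_
    exact hB.eq_of_mem hb₁ hb₂ (ne_of_mem_erase ha₁).symm
      (hx b₁ hb₁) (mem_of_mem_erase ha₁) (hx b₂ hb₂) (mem_of_mem_erase ha₂)
  calc 2 * B.card = ∑ b ∈ B, (b.erase x).card := by
        rw [sum_congr rfl fun b hb => by rw [card_erase_of_mem (hx b hb), h3 b hb],
          sum_const, smul_eq_mul, mul_comm]
    _ = (B.biUnion (·.erase x)).card := (card_biUnion hdisj).symm
    _ ≤ (univ.erase x).card :=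
        card_le_card fun a ha => by
          obtain ⟨b, -, hab⟩ := mem_biUnion.mp ha
          exact mem_erase.mpr ⟨ne_of_mem_erase hab, mem_univ a⟩
    _ = Fintype.card α - 1 := by rw [card_erase_of_mem (mem_univ x), card_univ]

theorem card_filter_mem_le (hB : IsLinear B)
    (hint : ∀ b₁ ∈ B, ∀ b₂ ∈ B, b₁ ≠ b₂ → ¬Disjoint b₁ b₂) {b₀ : Finset α} (hb₀ : b₀ ∈ B) {p : α}
    (hp : p ∉ b₀) : (B.filter (p ∈ ·)).card ≤ b₀.card := by
  have hcover : B.filter (p ∈ ·) ⊆ b₀.biUnion fun q => B.filter fun b => p ∈ b ∧ q ∈ b := by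
    intro b hb
    obtain ⟨hbB, hpb⟩ := mem_filter.mp hb
    obtain ⟨q, hqb, hqb₀⟩ :=
      not_disjoint_iff.mp (hint b hbB b₀ hb₀ fun h => hp (h ▸ hpb))
    exact mem_biUnion.mpr ⟨q, hqb₀, mem_filter.mpr ⟨hbB, hpb, hqb⟩⟩
  calc (B.filter (p ∈ ·)).card
      ≤ ∑ q ∈ b₀, (B.filter fun b => p ∈ b ∧ q ∈ b).card :=
        (card_le_card hcover).trans card_biUnion_le
    _ ≤ ∑ _q ∈ b₀, 1 := sum_le_sum fun q hq => hB p q fun h => hp (h ▸ hq)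
    _ = b₀.card := by rw [sum_const, smul_eq_mul, mul_one]

theorem card_le_seven (hB : IsLinear B) (h3 : ∀ b ∈ B, b.card = 3)
    (hint : ∀ b₁ ∈ B, ∀ b₂ ∈ B, b₁ ≠ b₂ → ¬Disjoint b₁ b₂)
    (hfree : ∀ x : α, ∃ b ∈ B, x ∉ b) : B.card ≤ 7 := by
  obtain rfl | ⟨b, hb⟩ := B.eq_empty_or_nonempty
  · simp
  have hcover : B.erase b ⊆ b.biUnion fun x => (B.filter (x ∈ ·)).erase b := by
    intro b' hb'
    obtain ⟨hne, hb'B⟩ := mem_erase.mp hb'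
    obtain ⟨x, hxb', hxb⟩ := not_disjoint_iff.mp (hint b' hb'B b hb hne)
    exact mem_biUnion.mpr ⟨x, hxb, mem_erase.mpr ⟨hne, mem_filter.mpr ⟨hb'B, hxb'⟩⟩⟩
  have hdeg : ∀ x ∈ b, ((B.filter (x ∈ ·)).erase b).card ≤ 2 := by
    intro x hx
    obtain ⟨b₀, hb₀, hxb₀⟩ := hfree x
    have := h3 b₀ hb₀ ▸ hB.card_filter_mem_le hint hb₀ hxb₀
    rw [card_erase_of_mem (mem_filter.mpr ⟨hb, hx⟩)]
    omega
  calc B.card = (B.erase b).card + 1 := (card_erase_add_one hb).symm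
    _ ≤ ∑ x ∈ b, ((B.filter (x ∈ ·)).erase b).card + 1 := by
        gcongr; exact (card_le_card hcover).trans card_biUnion_le
    _ ≤ ∑ _x ∈ b, 2 + 1 := by gcongr with x hx; exact hdeg x hx
    _ = 7 := by rw [sum_const, h3 b hb, smul_eq_mul]

end IsLinear

section Windmill

variable {ι : Type*}

def windmillBlade (c : α) (f : ι × Fin 2 → α) (i : ι) : Finset α :=
  insert c (univ.image fun k => f (i, k))

def windmill [Fintype ι] (c : α) (f : ι × Fin 2 → α) : Finset (Finset α) :=
  univ.image (windmillBlade c f)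

variable {c : α} {f : ι × Fin 2 → α}

theorem mem_windmillBlade {i : ι} {z : α} :
    z ∈ windmillBlade c f i ↔ z = c ∨ ∃ k, f (i, k) = z := by
  simp [windmillBlade]

theorem eq_of_mem_windmillBlade (hf : Function.Injective f) {i j : ι} {z : α} (hz : z ≠ c)
    (hi : z ∈ windmillBlade c f i) (hj : z ∈ windmillBlade c f j) : i = j := by
  obtain _ | ⟨k, rfl⟩ := mem_windmillBlade.mp hi
  · contradiction
  obtain _ | ⟨l, hl⟩ := mem_windmillBlade.mp hj
  · contradiction
  exact (Prod.ext_iff.mp (hf hl)).1.symm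

theorem card_windmillBlade (hf : Function.Injective f) (hc : ∀ k, f k ≠ c) (i : ι) :
    (windmillBlade c f i).card = 3 := by
  rw [windmillBlade, card_insert_of_notMem, card_image_of_injective, card_univ, Fintype.card_fin]
  · exact fun k l h => (Prod.ext_iff.mp (hf h)).2
  · simpa using fun k => hc (i, k)

variable [Fintype ι]

theorem card_of_mem_windmill (hf : Function.Injective f) (hc : ∀ k, f k ≠ c) {b : Finset α}
    (hb : b ∈ windmill c f) : b.card = 3 := by
  obtain ⟨i, -, rfl⟩ := mem_image.mp hb
  exact card_windmillBlade hf hc i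

theorem center_mem_of_mem_windmill {b : Finset α} (hb : b ∈ windmill c f) : c ∈ b := by
  obtain ⟨i, -, rfl⟩ := mem_image.mp hb
  exact mem_insert_self _ _

theorem windmill_isLinear (hf : Function.Injective f) : IsLinear (windmill c f) := by
  intro x y hxy
  refine card_le_one.mpr fun b₁ hb₁ b₂ hb₂ => ?_
  obtain ⟨⟨i, -, rfl⟩, hx₁, hy₁⟩ := by simpa only [mem_filter, windmill, mem_image] using hb₁
  obtain ⟨⟨j, -, rfl⟩, hx₂, hy₂⟩ := by simpa only [mem_filter, windmill, mem_image] using hb₂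
  by_cases hxc : x = c
  · rw [eq_of_mem_windmillBlade hf (hxc ▸ hxy.symm) hy₁ hy₂]
  · rw [eq_of_mem_windmillBlade hf hxc hx₁ hx₂]

theorem card_windmill (hf : Function.Injective f) (hc : ∀ k, f k ≠ c) :
    (windmill c f).card = Fintype.card ι := by
  refine card_image_of_injective _ fun i j hij => ?_
  have hi : f (i, 0) ∈ windmillBlade c f i := mem_windmillBlade.mpr (.inr ⟨0, rfl⟩)
  exact eq_of_mem_windmillBlade hf (hc _) hi (hij ▸ hi)

end Windmill

/-- For v ≥ 15, the maximum number of blocks in a PSTS(v) in which no two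
blocks are disjoint (i.e. β(1,v)) equals ⌊(v-1)/2⌋. -/
theorem stmt_13 (v : ℕ) (hv : 15 ≤ v) :
    IsGreatest {n : ℕ | ∃ B : Finset (Finset (Fin v)),
      (∀ b ∈ B, b.card = 3) ∧
      (∀ x y : Fin v, x ≠ y → (B.filter (fun b => x ∈ b ∧ y ∈ b)).card ≤ 1) ∧
      B.Nonempty ∧
      (∀ b1 ∈ B, ∀ b2 ∈ B, b1 ≠ b2 → ¬ Disjoint b1 b2) ∧
      B.card = n} ((v - 1) / 2) := by
  constructor
  · let c : Fin v := ⟨0, by omega⟩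
    obtain ⟨e⟩ : Nonempty (Fin ((v - 1) / 2) × Fin 2 ↪ {x : Fin v // x ≠ c}) :=
      Function.Embedding.nonempty_of_card_le (by
        simp only [Fintype.card_prod, Fintype.card_fin, ne_eq, Fintype.card_subtype_compl,
          Fintype.card_unique]
        omega)
    have hf : Function.Injective (Subtype.val ∘ e) := Subtype.val_injective.comp e.injective
    have hc : ∀ k, (Subtype.val ∘ e) k ≠ c := fun k => (e k).2
    have hcard : (windmill c (Subtype.val ∘ e)).card = (v - 1) / 2 := by
      rw [card_windmill hf hc, Fintype.card_fin]
    refine ⟨windmill c (Subtype.val ∘ e), fun b hb => card_of_mem_windmill hf hc hb,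
      windmill_isLinear hf, card_pos.mp (by omega), fun b₁ hb₁ b₂ hb₂ _ =>
        not_disjoint_iff.mpr ⟨c, center_mem_of_mem_windmill hb₁, center_mem_of_mem_windmill hb₂⟩,
      hcard⟩
  · rintro n ⟨B, h3, hB : IsLinear B, -, hint, rfl⟩
    by_cases hstar : ∃ x, ∀ b ∈ B, x ∈ b
    · obtain ⟨x, hx⟩ := hstar
      have := hB.two_mul_card_le h3 hx
      rw [Fintype.card_fin] at this
      omega
    · push Not at hstar
      have := hB.card_le_seven h3 hint hstar
      omega
end
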